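/- arXiv:1409.0827 — 4 statements merged into one kernel-verified Lean document; each statement's English description precedes it below -/
import Mathlib

section
/- Let R be a (not necessarily commutative) ring containing elements t, x, y satisfying t·x = y·t + 1, x·t = t·y + 1, x·y = y·x, and t² = 0. Then e := t·x and f := −y·t satisfy: e + f = 1, e² = e, f² = f, e·f = 0, and f·e = 0. In particular e and f are complementary orthogonal idempotents. -/
/-!
Multiplying `t * x = y * t + 1` on the left by `t` and using `t * t = 0` gives `t * y * t = -t`,
which says exactly that `f = -(y * t)` is idempotent. Since `e = t * x = 1 - f`, everything else
is the general fact that `f` and `1 - f` are complementary orthogonal idempotents.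
-/

section NilHecke

variable {R : Type*} [Ring R] {t x y : R}

theorem mul_mul_eq_neg_of_mul_eq_mul_add_one (h : t * x = y * t + 1) (ht : t * t = 0) :
    t * y * t = -t :=
  calc t * y * t = t * (y * t + 1) - t := by noncomm_ring
    _ = t * (t * x) - t := by rw [h]
    _ = -t := by rw [← mul_assoc, ht, zero_mul, zero_sub]

theorem isIdempotentElem_neg_mul_of_mul_mul_eq_neg (h : t * y * t = -t) :
    IsIdempotentElem (-(y * t)) := by
  rw [IsIdempotentElem, neg_mul_neg, mul_assoc, ← mul_assoc t, h, mul_neg]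

end NilHecke

theorem nilHecke_idempotents_general {R : Type*} [Ring R] (t x y : R)
    (h1 : t * x = y * t + 1) (h4 : t * t = 0) :
    t * x + -(y * t) = 1 ∧
    (t * x) * (t * x) = t * x ∧
    (-(y * t)) * (-(y * t)) = -(y * t) ∧
    (t * x) * (-(y * t)) = 0 ∧
    (-(y * t)) * (t * x) = 0 := by
  have hf : IsIdempotentElem (-(y * t)) :=
    isIdempotentElem_neg_mul_of_mul_mul_eq_neg (mul_mul_eq_neg_of_mul_eq_mul_add_one h1 h4)
  have he : t * x = 1 - -(y * t) := by rw [h1]; abel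
  rw [he]
  exact ⟨sub_add_cancel _ _, hf.one_sub.eq, hf.eq, hf.one_sub_mul_self, hf.mul_one_sub_self⟩

theorem nilHecke_idempotents {R : Type*} [Ring R] (t x y : R)
    (h1 : t * x = y * t + 1) (h2 : x * t = t * y + 1)
    (h3 : x * y = y * x) (h4 : t * t = 0) :
    t * x + -(y * t) = 1 ∧
    (t * x) * (t * x) = t * x ∧
    (-(y * t)) * (-(y * t)) = -(y * t) ∧
    (t * x) * (-(y * t)) = 0 ∧
    (-(y * t)) * (t * x) = 0 :=
  nilHecke_idempotents_general t x y h1 h4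
end

section
/- Let n ≥ 2 and let a₁, …, a_{n−1} be integers, not all zero. Set a₀ = aₙ = 0 and define λᵢ = 2aᵢ − a_{i−1} − a_{i+1} for 1 ≤ i ≤ n−1. Then there exists an index i with either (aᵢ ≥ 1 and λᵢ ≥ 1) or (aᵢ ≤ −1 and λᵢ ≤ −1). -/
/-! At the leftmost point `i` where `a` attains its maximum on `[0, n]` we have
`a (i - 1) < a i` and `a (i + 1) ≤ a i`, so `2 * a i - a (i - 1) - a (i + 1) ≥ 1`; if some `a j`
is positive, this maximum is positive, hence `i` is neither `0` nor `n`. The negative case is the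
positive one applied to `-a`. -/

lemma exists_leftmost_argmax (a : ℕ → ℤ) (n : ℕ) :
    ∃ i ≤ n, (∀ k ≤ n, a k ≤ a i) ∧ ∀ k < i, a k < a i := by
  classical
  have hex : ∃ i, i ≤ n ∧ ∀ k ≤ n, a k ≤ a i := by
    obtain ⟨m, hm, hmax⟩ := Finset.exists_max_image (Finset.range (n + 1)) a ⟨0, by simp⟩
    exact ⟨m, Nat.lt_succ_iff.mp (Finset.mem_range.mp hm),
      fun k hk ↦ hmax k (Finset.mem_range.mpr (Nat.lt_succ_of_le hk))⟩
  obtain ⟨hle, hmax⟩ := Nat.find_spec hex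
  refine ⟨Nat.find hex, hle, hmax, fun k hk ↦ ?_⟩
  have hkn : k ≤ n := hk.le.trans hle
  refine (hmax k hkn).lt_of_ne fun heq ↦ Nat.find_min hex hk ⟨hkn, ?_⟩
  simpa [heq] using hmax

lemma exists_pos_and_two_mul_sub_pos {a : ℕ → ℤ} {n j : ℕ} (h0 : a 0 = 0) (hn : a n = 0)
    (hjn : j ≤ n) (hj : 0 < a j) :
    ∃ i, 0 < i ∧ i < n ∧ 0 < a i ∧ 0 < 2 * a i - a (i - 1) - a (i + 1) := by
  obtain ⟨i, hin, hmax, hleft⟩ := exists_leftmost_argmax a n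
  have hpos : 0 < a i := hj.trans_le (hmax j hjn)
  have hi0 : i ≠ 0 := by rintro rfl; omega
  have hi_ne_n : i ≠ n := by rintro rfl; omega
  have hprev : a (i - 1) < a i := hleft (i - 1) (by omega)
  have hnext : a (i + 1) ≤ a i := hmax (i + 1) (by omega)
  exact ⟨i, by omega, by omega, hpos, by omega⟩

theorem sl_n_middle_weight_claim_general (n : ℕ) (a : ℕ → ℤ)
    (h0 : a 0 = 0) (hn' : a n = 0)
    (hne : ∃ i, 1 ≤ i ∧ i ≤ n - 1 ∧ a i ≠ 0) :
    ∃ i, 1 ≤ i ∧ i ≤ n - 1 ∧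
      ((1 ≤ a i ∧ 1 ≤ 2 * a i - a (i - 1) - a (i + 1)) ∨
       (a i ≤ -1 ∧ 2 * a i - a (i - 1) - a (i + 1) ≤ -1)) := by
  obtain ⟨j, -, hjn, hj⟩ := hne
  rcases hj.lt_or_gt with hneg | hpos
  · obtain ⟨i, hi0, hin, hai, hlam⟩ :=
      exists_pos_and_two_mul_sub_pos (a := (-a ·)) (by simp [h0]) (by simp [hn'])
        (by omega : j ≤ n) (neg_pos.mpr hneg)
    exact ⟨i, hi0, by omega, Or.inr ⟨by omega, by omega⟩⟩
  · obtain ⟨i, hi0, hin, hai, hlam⟩ :=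
      exists_pos_and_two_mul_sub_pos h0 hn' (by omega : j ≤ n) hpos
    exact ⟨i, hi0, by omega, Or.inl ⟨hai, hlam⟩⟩

theorem sl_n_middle_weight_claim (n : ℕ) (hn : 2 ≤ n) (a : ℕ → ℤ)
    (h0 : a 0 = 0) (hn' : a n = 0)
    (hne : ∃ i, 1 ≤ i ∧ i ≤ n - 1 ∧ a i ≠ 0) :
    ∃ i, 1 ≤ i ∧ i ≤ n - 1 ∧
      ((1 ≤ a i ∧ 1 ≤ 2 * a i - a (i - 1) - a (i + 1)) ∨
       (a i ≤ -1 ∧ 2 * a i - a (i - 1) - a (i + 1) ≤ -1)) :=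
  sl_n_middle_weight_claim_general n a h0 hn' hne
end

section
/- Let n ≥ 2, and consider the root lattice Y of sl_n with simple roots α₁, …, α_{n−1} and pairing ⟨λ, αᵢ⟩ = 2aᵢ − a_{i−1} − a_{i+1} for λ = Σⱼ aⱼαⱼ (with a₀ = aₙ = 0). Call a step λ ↝ λ + αᵢ a valid slide if ⟨λ, αᵢ⟩ ≥ −1, and λ ↝ λ − αᵢ a valid slide if ⟨λ, αᵢ⟩ ≤ 1. Then for every λ ∈ Y there exists a finite sequence of valid slides starting at 0 and ending at λ. -/
/-!
Induct on `Σⱼ |aⱼ|`. If `λ ≠ 0` has a positive coefficient, let `M > 0` be its largest one and `i`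
the first index where it is attained. Then `a_{i-1} ≤ M - 1` and `a_{i+1} ≤ M`, so
`⟨λ, αᵢ⟩ ≥ 1`, hence `⟨λ - αᵢ, αᵢ⟩ ≥ -1` and `λ - αᵢ ↝ λ` is a valid slide, while `λ - αᵢ` has
smaller `Σⱼ |aⱼ|`. A weight with only nonpositive coefficients is handled through the symmetry
`λ ↦ -λ`, which maps valid slides to valid slides.
-/

/-- The type A pairing `⟨λ, αᵢ⟩ = 2aᵢ − a_{i−1} − a_{i+1}` for a weight written as
`λ = Σⱼ aⱼ αⱼ`, encoded as a function `a : ℕ → ℤ` (supported on `1, …, n−1`). -/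
def typeAPairing (a : ℕ → ℤ) (i : ℕ) : ℤ := 2 * a i - a (i - 1) - a (i + 1)

/-- A valid slide on the root lattice of `sl_n`: `λ ↝ λ + αᵢ` if `⟨λ, αᵢ⟩ ≥ −1`, and
`λ ↝ λ − αᵢ` if `⟨λ, αᵢ⟩ ≤ 1`, for `1 ≤ i ≤ n−1`. -/
def ValidSlide (n : ℕ) (a b : ℕ → ℤ) : Prop :=
  ∃ i, 1 ≤ i ∧ i ≤ n - 1 ∧
    ((-1 ≤ typeAPairing a i ∧ b = fun j => a j + if j = i then 1 else 0) ∨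
     (typeAPairing a i ≤ 1 ∧ b = fun j => a j - if j = i then 1 else 0))

open Finset Relation

/-- Elements of the root lattice of `sl_n`, written in the basis of simple roots. -/
def InRootLattice (n : ℕ) (a : ℕ → ℤ) : Prop := ∀ j ∉ Icc 1 (n - 1), a j = 0

namespace InRootLattice

variable {n : ℕ} {a : ℕ → ℤ}

lemma mem_Icc_of_ne_zero (ha : InRootLattice n a) {j : ℕ} (hj : a j ≠ 0) : j ∈ Icc 1 (n - 1) :=
  not_imp_comm.mp (ha j) hj

lemma neg (ha : InRootLattice n a) : InRootLattice n (-a) := fun j hj => by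
  simp [ha j hj]

lemma sub_single (ha : InRootLattice n a) {i : ℕ} (hi : i ∈ Icc 1 (n - 1)) :
    InRootLattice n (a - Pi.single i 1) := fun j hj => by
  have hji : j ≠ i := fun h => hj (h ▸ hi)
  simp [ha j hj, hji]

lemma eq_zero_of_sum_natAbs_eq_zero (ha : InRootLattice n a)
    (h : ∑ j ∈ Icc 1 (n - 1), (a j).natAbs = 0) : a = 0 := by
  funext j
  by_contra hj
  exact hj (Int.natAbs_eq_zero.mp (sum_eq_zero_iff.mp h j (ha.mem_Icc_of_ne_zero hj)))

lemma exists_forall_le (ha : InRootLattice n a) {j : ℕ} (hj : 0 < a j) :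
    ∃ m, 0 < a m ∧ ∀ k, a k ≤ a m := by
  obtain ⟨m, hm, hmax⟩ := exists_max_image (Icc 1 (n - 1)) a ⟨j, ha.mem_Icc_of_ne_zero hj.ne'⟩
  have hm_pos : 0 < a m := hj.trans_le (hmax j (ha.mem_Icc_of_ne_zero hj.ne'))
  refine ⟨m, hm_pos, fun k => ?_⟩
  by_cases hk : k ∈ Icc 1 (n - 1)
  · exact hmax k hk
  · rw [ha k hk]
    exact hm_pos.le

lemma exists_one_le_typeAPairing (ha : InRootLattice n a) {j : ℕ} (hj : 0 < a j) :
    ∃ i, 0 < a i ∧ 1 ≤ typeAPairing a i := by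
  classical
  obtain ⟨m, hm_pos, hmax⟩ := ha.exists_forall_le hj
  have hex : ∃ k, a k = a m := ⟨m, rfl⟩
  set i := Nat.find hex
  have hi : a i = a m := Nat.find_spec hex
  have hi_pos : 0 < i := (mem_Icc.mp (ha.mem_Icc_of_ne_zero (hi ▸ hm_pos.ne'))).1
  have hleft : a (i - 1) ≠ a m := Nat.find_min hex (Nat.sub_lt hi_pos one_pos)
  refine ⟨i, hi ▸ hm_pos, ?_⟩
  have := hmax (i - 1)
  have := hmax (i + 1)
  unfold typeAPairing
  omega

end InRootLattice

lemma typeAPairing_neg (a : ℕ → ℤ) (i : ℕ) : typeAPairing (-a) i = -typeAPairing a i := by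
  simp only [typeAPairing, Pi.neg_apply]
  ring

lemma typeAPairing_sub_single (a : ℕ → ℤ) {i : ℕ} (hi : 1 ≤ i) :
    typeAPairing (a - Pi.single i 1) i = typeAPairing a i - 2 := by
  have h₁ : i - 1 ≠ i := by omega
  have h₂ : i + 1 ≠ i := by omega
  simp only [typeAPairing, Pi.sub_apply, Pi.single_eq_same, Pi.single_eq_of_ne h₁,
    Pi.single_eq_of_ne h₂]
  ring

lemma sum_natAbs_sub_single {s : Finset ℕ} {a : ℕ → ℤ} {i : ℕ} (hi : i ∈ s) (ha : 0 < a i) :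
    ∑ j ∈ s, ((a - Pi.single i 1 : ℕ → ℤ) j).natAbs + 1 = ∑ j ∈ s, (a j).natAbs := by
  have herase : ∑ j ∈ s.erase i, ((a - Pi.single i 1 : ℕ → ℤ) j).natAbs =
      ∑ j ∈ s.erase i, (a j).natAbs :=
    sum_congr rfl fun j hj => by simp [ne_of_mem_erase hj]
  rw [← add_sum_erase s _ hi, ← add_sum_erase s _ hi, herase]
  simp only [Pi.sub_apply, Pi.single_eq_same]
  omega

namespace ValidSlide

variable {n : ℕ}

lemma neg {a b : ℕ → ℤ} (h : ValidSlide n a b) : ValidSlide n (-a) (-b) := by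
  obtain ⟨i, h₁, h₂, ⟨hp, rfl⟩ | ⟨hp, rfl⟩⟩ := h
  · refine ⟨i, h₁, h₂, Or.inr ⟨by rw [typeAPairing_neg]; omega, ?_⟩⟩
    funext j
    simp only [Pi.neg_apply]
    ring
  · refine ⟨i, h₁, h₂, Or.inl ⟨by rw [typeAPairing_neg]; omega, ?_⟩⟩
    funext j
    simp only [Pi.neg_apply]
    ring

lemma sub_single {a : ℕ → ℤ} {i : ℕ} (hi : i ∈ Icc 1 (n - 1)) (hp : 1 ≤ typeAPairing a i) :
    ValidSlide n (a - Pi.single i 1) a := by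
  obtain ⟨h₁, h₂⟩ := mem_Icc.mp hi
  refine ⟨i, h₁, h₂, Or.inl ⟨by rw [typeAPairing_sub_single a h₁]; omega, ?_⟩⟩
  funext j
  simp [Pi.single_apply]

lemma reflTransGen_neg {a b : ℕ → ℤ} (h : ReflTransGen (ValidSlide n) a b) :
    ReflTransGen (ValidSlide n) (-a) (-b) :=
  ReflTransGen.lift (fun c => -c) (fun _ _ => neg) _ _ h

end ValidSlide

theorem InRootLattice.reflTransGen_validSlide_zero {n : ℕ} {a : ℕ → ℤ} (ha : InRootLattice n a) :
    ReflTransGen (ValidSlide n) 0 a := by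
  induction hN : ∑ j ∈ Icc 1 (n - 1), (a j).natAbs generalizing a with
  | zero => rw [ha.eq_zero_of_sum_natAbs_eq_zero hN]
  | succ N ih =>
    have of_pos : ∀ b : ℕ → ℤ, InRootLattice n b → ∑ j ∈ Icc 1 (n - 1), (b j).natAbs = N + 1 →
        ∀ j, 0 < b j → ReflTransGen (ValidSlide n) 0 b := by
      intro b hb hbN j hj
      obtain ⟨i, hi_pos, hp⟩ := hb.exists_one_le_typeAPairing hj
      have hi := hb.mem_Icc_of_ne_zero hi_pos.ne'
      refine (ih (hb.sub_single hi) ?_).tail (ValidSlide.sub_single hi hp)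
      have := sum_natAbs_sub_single hi hi_pos
      omega
    obtain ⟨j, hj⟩ : ∃ j, a j ≠ 0 := by
      by_contra! h
      simp [h] at hN
    rcases hj.lt_or_gt with hneg | hpos
    · have hnegN : ∑ j ∈ Icc 1 (n - 1), ((-a) j).natAbs = N + 1 := by simpa using hN
      simpa using ValidSlide.reflTransGen_neg (of_pos (-a) ha.neg hnegN j (by simpa using hneg))
    · exact of_pos a ha hN j hpos

theorem sl_n_has_middle_weight_general (n : ℕ) (lam : ℕ → ℤ)
    (hsupp : ∀ j, (j < 1 ∨ n - 1 < j) → lam j = 0) :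
    Relation.ReflTransGen (ValidSlide n) (fun _ => 0) lam :=
  InRootLattice.reflTransGen_validSlide_zero (n := n) fun j hj =>
    hsupp j (by rw [mem_Icc] at hj; omega)

theorem sl_n_has_middle_weight (n : ℕ) (hn : 2 ≤ n) (lam : ℕ → ℤ)
    (hsupp : ∀ j, (j < 1 ∨ n - 1 < j) → lam j = 0) :
    Relation.ReflTransGen (ValidSlide n) (fun _ => 0) lam :=
  sl_n_has_middle_weight_general n lam hsupp
end

section
/- Let I be a set and consider finite lists of pairs (c, k) with c ∈ {+1, −1} and k ∈ I. Allow two moves: (Switch) swap two adjacent entries (c,k), (c',k') provided c + c' = 0 and k ≠ k'; (Drop) delete two adjacent entries of the form (c,k), (−c,k). Then every list in which, for each k ∈ I, the number of entries (+1,k) equals the number of entries (−1,k), can be reduced to the empty list by a finite sequence of these moves. -/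
/-!
Induct on the length. A nonempty list begins with some `(c, k)`, and balance places a `(-c, k)`
further on: `(c, k) :: B ++ (-c, k) :: s`, where every sign in `B` is `±c`. Scanning `B`, each
entry `(-c, y)` is carried leftwards by switches through the entries of sign `c` before it, the
first of which is `(c, k)`; if it meets a `(c, y)` on the way, the two are dropped instead. When
`B` is used up, `(-c, k)` travels left in the same way and is dropped with `(c, k)` at the latest.
Either way the list gets shorter, and moves preserve both the signs and the balance.
-/

/-- A single switch or drop move on a signed list. -/
inductive SwitchDropMove (I : Type*) : List (ℤ × I) → List (ℤ × I) → Prop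
  | switch (l₁ l₂ : List (ℤ × I)) (c c' : ℤ) (k k' : I)
      (hc : c + c' = 0) (hk : k ≠ k') :
      SwitchDropMove I (l₁ ++ (c, k) :: (c', k') :: l₂) (l₁ ++ (c', k') :: (c, k) :: l₂)
  | drop (l₁ l₂ : List (ℤ × I)) (c : ℤ) (k : I) :
      SwitchDropMove I (l₁ ++ (c, k) :: (-c, k) :: l₂) (l₁ ++ l₂)

namespace SwitchDropMove

variable {I : Type*} {l l' : List (ℤ × I)}

theorem append_left (A : List (ℤ × I)) (h : SwitchDropMove I l l') :
    SwitchDropMove I (A ++ l) (A ++ l') := by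
  cases h with
  | switch l₁ l₂ c c' k k' hc hk =>
    simpa only [List.append_assoc] using switch (A ++ l₁) l₂ c c' k k' hc hk
  | drop l₁ l₂ c k => simpa only [List.append_assoc] using drop (A ++ l₁) l₂ c k

theorem reflTransGen_append_left (A : List (ℤ × I))
    (h : Relation.ReflTransGen (SwitchDropMove I) l l') :
    Relation.ReflTransGen (SwitchDropMove I) (A ++ l) (A ++ l') :=
  h.lift (A ++ ·) fun _ _ => append_left A

theorem reflTransGen_cons (a : ℤ × I) (h : Relation.ReflTransGen (SwitchDropMove I) l l') :
    Relation.ReflTransGen (SwitchDropMove I) (a :: l) (a :: l') :=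
  reflTransGen_append_left [a] h

theorem length_le (h : SwitchDropMove I l l') : l'.length ≤ l.length := by
  cases h <;> simp only [List.length_append, List.length_cons] <;> omega

theorem subset (h : SwitchDropMove I l l') : l' ⊆ l := by
  cases h <;> intro p <;> simp only [List.mem_append, List.mem_cons] <;> tauto

theorem reflTransGen_length_le (h : Relation.ReflTransGen (SwitchDropMove I) l l') :
    l'.length ≤ l.length := by
  induction h with
  | refl => rfl
  | tail _ hmove ih => exact (length_le hmove).trans ih

theorem reflTransGen_subset (h : Relation.ReflTransGen (SwitchDropMove I) l l') : l' ⊆ l := by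
  induction h with
  | refl => exact List.Subset.refl _
  | tail _ hmove ih => exact List.Subset.trans (subset hmove) ih

def Shortens (l : List (ℤ × I)) : Prop :=
  ∃ l', Relation.ReflTransGen (SwitchDropMove I) l l' ∧ l'.length < l.length

theorem Shortens.append_left (A : List (ℤ × I)) (h : Shortens l) : Shortens (A ++ l) := by
  obtain ⟨l', hred, hlt⟩ := h
  exact ⟨A ++ l', reflTransGen_append_left A hred, by simpa using hlt⟩

theorem Shortens.cons (a : ℤ × I) (h : Shortens l) : Shortens (a :: l) :=
  h.append_left [a]

theorem Shortens.of_reflTransGen (hred : Relation.ReflTransGen (SwitchDropMove I) l l')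
    (h : Shortens l') : Shortens l := by
  obtain ⟨l'', hred', hlt⟩ := h
  exact ⟨l'', hred.trans hred', hlt.trans_le (reflTransGen_length_le hred)⟩

theorem shortens_cons_cons_neg (c : ℤ) (k : I) (s : List (ℤ × I)) :
    Shortens ((c, k) :: (-c, k) :: s) :=
  ⟨s, .single (by simpa using drop [] s c k), by simp⟩

theorem reflTransGen_cons_or_shortens {c : ℤ} (y : I) (s : List (ℤ × I)) :
    ∀ P : List (ℤ × I), (∀ p ∈ P, p.1 = c) →
      Relation.ReflTransGen (SwitchDropMove I) (P ++ (-c, y) :: s) ((-c, y) :: (P ++ s)) ∨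
        Shortens (P ++ (-c, y) :: s)
  | [], _ => .inl .refl
  | (d, x) :: P, hP => by
    obtain rfl : d = c := hP _ List.mem_cons_self
    rcases reflTransGen_cons_or_shortens y s P fun p hp => hP p (List.mem_cons_of_mem _ hp) with
      hpass | hshort
    · by_cases hxy : x = y
      · subst hxy
        exact .inr ((shortens_cons_cons_neg d x _).of_reflTransGen (reflTransGen_cons _ hpass))
      · refine .inl ((reflTransGen_cons _ hpass).tail ?_)
        simpa using switch [] (P ++ s) d (-d) x y (add_neg_cancel d) hxy
    · exact .inr (hshort.cons _)

/-- `P` holds the entries of sign `c` of the gap scanned so far. -/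
theorem shortens_of_block {c : ℤ} (k : I) (s : List (ℤ × I)) :
    ∀ B P : List (ℤ × I), (∀ p ∈ P, p.1 = c) → (∀ p ∈ B, p.1 = c ∨ p.1 = -c) →
      Shortens ((c, k) :: (P ++ B ++ (-c, k) :: s))
  | [], P, hP, _ => by
    rcases reflTransGen_cons_or_shortens k s P hP with hpass | hshort
    · exact (shortens_cons_cons_neg c k _).of_reflTransGen
        (by simpa using reflTransGen_cons _ hpass)
    · simpa using hshort.cons _
  | (d, y) :: B, P, hP, hB => by
    have hB' : ∀ p ∈ B, p.1 = c ∨ p.1 = -c := fun p hp => hB p (List.mem_cons_of_mem _ hp)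
    obtain rfl | rfl : d = c ∨ d = -c := hB _ List.mem_cons_self
    · have hP' : ∀ p ∈ P ++ [(d, y)], p.1 = d := List.forall_mem_append.2 ⟨hP, by simp⟩
      simpa using shortens_of_block k s B (P ++ [(d, y)]) hP' hB'
    · have hQ : ∀ p ∈ (c, k) :: P, p.1 = c := List.forall_mem_cons.2 ⟨rfl, hP⟩
      rcases reflTransGen_cons_or_shortens y (B ++ (-c, k) :: s) _ hQ with hpass | hshort
      · exact ((shortens_of_block k s B P hP hB').cons _).of_reflTransGen (by simpa using hpass)
      · simpa using hshort

section Balance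

variable [DecidableEq I]

theorem count_one_eq_count_neg_one (h : SwitchDropMove I l l')
    (hbal : ∀ k : I, l.count ((1 : ℤ), k) = l.count ((-1 : ℤ), k)) (k : I) :
    l'.count ((1 : ℤ), k) = l'.count ((-1 : ℤ), k) := by
  have := hbal k
  cases h with
  | switch => simp only [List.count_append, List.count_cons] at this ⊢; omega
  | drop l₁ l₂ c k' =>
    simp only [List.count_append, List.count_cons, beq_iff_eq, Prod.mk.injEq] at this ⊢
    grind

theorem reflTransGen_count_one_eq_count_neg_one
    (h : Relation.ReflTransGen (SwitchDropMove I) l l')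
    (hbal : ∀ k : I, l.count ((1 : ℤ), k) = l.count ((-1 : ℤ), k)) (k : I) :
    l'.count ((1 : ℤ), k) = l'.count ((-1 : ℤ), k) := by
  induction h generalizing k with
  | refl => exact hbal k
  | tail _ hmove ih => exact count_one_eq_count_neg_one hmove ih k

end Balance

end SwitchDropMove

theorem neg_mem_of_count_one_eq_count_neg_one {I : Type*} [DecidableEq I] {c : ℤ} {k : I}
    {t : List (ℤ × I)} (hc : c = 1 ∨ c = -1)
    (hbal : ((c, k) :: t).count ((1 : ℤ), k) = ((c, k) :: t).count ((-1 : ℤ), k)) :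
    (-c, k) ∈ t := by
  simp only [List.count_cons, beq_iff_eq, Prod.mk.injEq] at hbal
  rcases hc with rfl | rfl
  · exact List.count_pos_iff.1 (by simp at hbal; omega)
  · exact List.count_pos_iff.1 (by simp at hbal; rw [neg_neg]; omega)

theorem balanced_list_reduces_to_nil {I : Type*} [DecidableEq I]
    (l : List (ℤ × I))
    (hsigns : ∀ p ∈ l, p.1 = 1 ∨ p.1 = -1)
    (hbal : ∀ k : I, l.count ((1 : ℤ), k) = l.count ((-1 : ℤ), k)) :
    Relation.ReflTransGen (SwitchDropMove I) l [] := by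
  induction hn : l.length using Nat.strong_induction_on generalizing l with
  | _ n ih =>
  rcases l with _ | ⟨⟨c, k⟩, t⟩
  · exact .refl
  have hc : c = 1 ∨ c = -1 := hsigns _ List.mem_cons_self
  obtain ⟨B, s, rfl⟩ := List.append_of_mem (neg_mem_of_count_one_eq_count_neg_one hc (hbal k))
  have hB : ∀ p ∈ B, p.1 = c ∨ p.1 = -c := fun p hp => by
    have := hsigns p (by simp [hp])
    omega
  obtain ⟨l', hred, hlt⟩ := SwitchDropMove.shortens_of_block k s B [] (by simp) hB
  have hsigns' : ∀ p ∈ l', p.1 = 1 ∨ p.1 = -1 :=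
    fun p hp => hsigns p (SwitchDropMove.reflTransGen_subset hred hp)
  exact hred.trans <| ih l'.length (hn ▸ hlt) l' hsigns'
    (SwitchDropMove.reflTransGen_count_one_eq_count_neg_one hred hbal) rfl
end
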